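/- arXiv:2502.15673 — 8 statements merged into one kernel-verified Lean document; each statement's English description precedes it below -/
import Mathlib

section
/- Let d ≥ 1 and let y : [0,T) → ℝ be a solution of y^{(d+1)} = y · y^{(d)} with y(0) = ⋯ = y^{(d-1)}(0) = 0 and y^{(d)}(0) = 1. Then y(t) ≥ 0, y'(t) ≥ 0, ..., y^{(d-1)}(t) ≥ 0 and y^{(d)}(t) ≥ 1 for all t ∈ [0,T). -/
/-!
Writing `u = y^{(d)}`, the equation reads `u' = y u`, so the integrating factor gives
`u t = exp (∫₀ᵗ y) > 0`. Hence `y^{(d-1)}, …, y` vanish at `0` and have nonnegative derivatives,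
so they are nonnegative; in particular `∫₀ᵗ y ≥ 0` and `u t ≥ 1`.
-/

open Set

lemma eq_mul_exp_integral_of_hasDerivWithinAt {f u : ℝ → ℝ} {a b : ℝ} (hf : Continuous f)
    (hu : ContinuousOn u (Icc a b))
    (hderiv : ∀ x ∈ Ico a b, HasDerivWithinAt u (f x * u x) (Ici x) x) :
    ∀ t ∈ Icc a b, u t = u a * Real.exp (∫ s in a..t, f s) := by
  set F : ℝ → ℝ := fun t ↦ ∫ s in a..t, f s
  have hF : ∀ x, HasDerivAt F (f x) x := fun x ↦ (hf.integral_hasStrictDerivAt a x).hasDerivAt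
  set g : ℝ → ℝ := fun x ↦ u x * Real.exp (-F x)
  have hg_cont : ContinuousOn g (Icc a b) :=
    hu.mul (continuous_iff_continuousAt.2 fun x ↦ (hF x).continuousAt).neg.rexp.continuousOn
  have hg_deriv : ∀ x ∈ Ico a b, HasDerivWithinAt g 0 (Ici x) x := fun x hx ↦
    ((hderiv x hx).mul (hF x).neg.exp.hasDerivWithinAt).congr_deriv (by ring)
  intro t ht
  have hg : g t = g a := constant_of_has_deriv_right_zero hg_cont hg_deriv t ht
  simp only [g, F, intervalIntegral.integral_same, neg_zero, Real.exp_zero, mul_one] at hg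
  rw [← hg, mul_assoc, ← Real.exp_add, neg_add_cancel, Real.exp_zero, mul_one]

lemma nonneg_on_Ico_of_deriv_nonneg {f : ℝ → ℝ} {a b : ℝ} (hf : Differentiable ℝ f)
    (ha : 0 ≤ f a) (hf' : ∀ x ∈ Ico a b, 0 ≤ deriv f x) : ∀ x ∈ Ico a b, 0 ≤ f x := by
  intro x hx
  have hmono : MonotoneOn f (Icc a x) := by
    refine monotoneOn_of_deriv_nonneg (convex_Icc a x) hf.continuous.continuousOn
      hf.differentiableOn fun z hz ↦ hf' z ?_
    rw [interior_Icc] at hz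
    exact ⟨hz.1.le, hz.2.trans hx.2⟩
  exact ha.trans (hmono (left_mem_Icc.2 hx.1) (right_mem_Icc.2 hx.1) hx.1)

lemma iteratedDeriv_nonneg_on_Ico {f : ℝ → ℝ} {n : ℕ} {a b : ℝ} (hf : ContDiff ℝ n f)
    (ha : ∀ i < n, 0 ≤ iteratedDeriv i f a)
    (hn : ∀ x ∈ Ico a b, 0 ≤ iteratedDeriv n f x) :
    ∀ i ≤ n, ∀ x ∈ Ico a b, 0 ≤ iteratedDeriv i f x := by
  intro i hi
  induction hi using Nat.decreasingInduction with
  | self => exact hn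
  | of_succ i hi ih =>
    refine nonneg_on_Ico_of_deriv_nonneg
      (hf.differentiable_iteratedDeriv i (by exact_mod_cast hi)) (ha i hi) ?_
    simpa only [← iteratedDeriv_succ] using ih

theorem stmt_2_general (d : ℕ) (T : ℝ) (y : ℝ → ℝ)
    (hy : ContDiff ℝ (d + 1) y)
    (hode : ∀ t ∈ Ico (0 : ℝ) T,
      iteratedDeriv (d + 1) y t = y t * iteratedDeriv d y t)
    (hic : ∀ i < d, iteratedDeriv i y 0 = 0)
    (hicd : iteratedDeriv d y 0 = 1) :
    ∀ t ∈ Ico (0 : ℝ) T,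
      (∀ i < d, 0 ≤ iteratedDeriv i y t) ∧ 1 ≤ iteratedDeriv d y t := by
  have hu_diff : Differentiable ℝ (iteratedDeriv d y) :=
    hy.differentiable_iteratedDeriv d (by exact_mod_cast Nat.lt_succ_self d)
  have hu_deriv : ∀ x ∈ Ico (0 : ℝ) T,
      HasDerivAt (iteratedDeriv d y) (y x * iteratedDeriv d y x) x := fun x hx ↦ by
    rw [← hode x hx, iteratedDeriv_succ]
    exact (hu_diff x).hasDerivAt
  have hexp : ∀ t ∈ Ico (0 : ℝ) T, iteratedDeriv d y t = Real.exp (∫ s in (0 : ℝ)..t, y s) := by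
    intro t ht
    have := eq_mul_exp_integral_of_hasDerivWithinAt (b := t) hy.continuous
      hu_diff.continuous.continuousOn
      (fun x hx ↦ (hu_deriv x ⟨hx.1, hx.2.trans ht.2⟩).hasDerivWithinAt) t (right_mem_Icc.2 ht.1)
    rwa [hicd, one_mul] at this
  have hnonneg := iteratedDeriv_nonneg_on_Ico (b := T) (hy.of_le (by norm_cast; omega))
    (fun i hi ↦ (hic i hi).ge) (fun t ht ↦ hexp t ht ▸ (Real.exp_pos _).le)
  refine fun t ht ↦ ⟨fun i hi ↦ hnonneg i hi.le t ht, ?_⟩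
  rw [hexp t ht]
  refine Real.one_le_exp (intervalIntegral.integral_nonneg ht.1 fun x hx ↦ ?_)
  simpa only [iteratedDeriv_zero] using hnonneg 0 d.zero_le x ⟨hx.1, hx.2.trans_lt ht.2⟩

/-- absolute monotonicity bounds for a solution of
y^{(d+1)} = y·y^{(d)} with zero initial conditions up to order d−1 and
y^{(d)}(0) = 1. -/
theorem stmt_2 (d : ℕ) (hd : 1 ≤ d) (T : ℝ) (hT : 0 < T) (y : ℝ → ℝ)
    (hy : ContDiff ℝ (d + 1) y)
    (hode : ∀ t ∈ Ico (0 : ℝ) T,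
      iteratedDeriv (d + 1) y t = y t * iteratedDeriv d y t)
    (hic : ∀ i < d, iteratedDeriv i y 0 = 0)
    (hicd : iteratedDeriv d y 0 = 1) :
    ∀ t ∈ Ico (0 : ℝ) T,
      (∀ i < d, 0 ≤ iteratedDeriv i y t) ∧ 1 ≤ iteratedDeriv d y t :=
  stmt_2_general d T y hy hode hic hicd
end

section
/- Under the same hypotheses, for each i ∈ {0,...,d} the function y^{(i)} is strictly increasing on [0,T), and y^{(i)}(t) > 0 for all t ∈ (0,T). -/
open Set Filter

/-- for each i ∈ {0,…,d}, y^{(i)} is strictly increasing on [0,T)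
and strictly positive on (0,T). -/
theorem stmt_3 (d : ℕ) (hd : 1 ≤ d) (T : ℝ) (hT : 0 < T) (y : ℝ → ℝ)
    (hy : ContDiff ℝ (d + 1) y)
    (hode : ∀ t ∈ Ico (0 : ℝ) T,
      iteratedDeriv (d + 1) y t = y t * iteratedDeriv d y t)
    (hic : ∀ i < d, iteratedDeriv i y 0 = 0)
    (hicd : iteratedDeriv d y 0 = 1) :
    ∀ i ≤ d, StrictMonoOn (iteratedDeriv i y) (Ico (0 : ℝ) T) ∧
      ∀ t ∈ Ioo (0 : ℝ) T, 0 < iteratedDeriv i y t := by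
  have hcont : ∀ i ≤ d, Continuous (iteratedDeriv i y) := by
    intro i hi
    exact hy.continuous_iteratedDeriv i (by exact_mod_cast Nat.le_succ_of_le hi)
  -- key propagation lemma: positivity of the d-th derivative on [0,b) propagates down
  have key : ∀ b : ℝ, 0 < b → b ≤ T → (∀ s ∈ Ico (0:ℝ) b, 0 < iteratedDeriv d y s) →
      ∀ k i : ℕ, i + k = d → ∀ s ∈ Ioo (0:ℝ) b, 0 < iteratedDeriv i y s := by
    intro b hb0 hbT hfpos k
    induction k with
    | zero =>
      intro i hi s hs
      have : i = d := by omega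
      subst this
      exact hfpos s ⟨hs.1.le, hs.2⟩
    | succ k ih =>
      intro i hi s hs
      have hmono : StrictMonoOn (iteratedDeriv i y) (Icc 0 s) := by
        apply strictMonoOn_of_deriv_pos (convex_Icc 0 s)
        · exact (hcont i (by omega)).continuousOn
        · intro x hx
          rw [interior_Icc] at hx
          have : 0 < iteratedDeriv (i + 1) y x :=
            ih (i + 1) (by omega) x ⟨hx.1, hx.2.trans hs.2⟩
          rwa [iteratedDeriv_succ] at this
      have h2 := hmono (left_mem_Icc.2 hs.1.le) (right_mem_Icc.2 hs.1.le) hs.1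
      rwa [hic i (by omega)] at h2
  -- positivity of the d-th derivative on [0,T)
  have hfpos : ∀ t ∈ Ico (0:ℝ) T, 0 < iteratedDeriv d y t := by
    by_contra hcon
    push_neg at hcon
    obtain ⟨a, ha, hfa⟩ := hcon
    set S : Set ℝ := Icc (0:ℝ) a ∩ (iteratedDeriv d y) ⁻¹' (Iic 0) with hS
    have hSclosed : IsClosed S :=
      isClosed_Icc.inter (isClosed_Iic.preimage (hcont d le_rfl))
    have hSne : S.Nonempty := ⟨a, ⟨ha.1, le_rfl⟩, hfa⟩
    have hSbdd : BddBelow S := ⟨0, fun x hx => hx.1.1⟩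
    set t₁ := sInf S with ht₁
    have ht₁mem : t₁ ∈ S := hSclosed.csInf_mem hSne hSbdd
    have ht₁T : t₁ < T := lt_of_le_of_lt ht₁mem.1.2 ha.2
    have ht₁0 : 0 < t₁ := by
      rcases lt_or_eq_of_le ht₁mem.1.1 with h | h
      · exact h
      · exfalso
        have h2 := ht₁mem.2
        simp only [mem_preimage, mem_Iic, ← h, hicd] at h2
        norm_num at h2
    have hpre : ∀ s ∈ Ico (0:ℝ) t₁, 0 < iteratedDeriv d y s := by
      intro s hs
      by_contra hns
      push_neg at hns
      have hsS : s ∈ S := ⟨⟨hs.1, hs.2.le.trans ht₁mem.1.2⟩, hns⟩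
      exact absurd (csInf_le hSbdd hsS) (not_le.2 hs.2)
    have hmono : StrictMonoOn (iteratedDeriv d y) (Icc 0 t₁) := by
      apply strictMonoOn_of_deriv_pos (convex_Icc 0 t₁)
      · exact (hcont d le_rfl).continuousOn
      · intro x hx
        rw [interior_Icc] at hx
        have hder : 0 < iteratedDeriv (d + 1) y x := by
          rw [hode x ⟨hx.1.le, hx.2.trans ht₁T⟩]
          have hy0 : 0 < y x := by
            have := key t₁ ht₁0 ht₁T.le hpre d 0 (by omega) x hx
            rwa [iteratedDeriv_zero] at this
          exact mul_pos hy0 (hpre x ⟨hx.1.le, hx.2⟩)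
        rwa [iteratedDeriv_succ] at hder
    have h2 := hmono (left_mem_Icc.2 ht₁0.le) (right_mem_Icc.2 ht₁0.le) ht₁0
    rw [hicd] at h2
    have := ht₁mem.2
    simp only [mem_preimage, mem_Iic] at this
    linarith
  -- conclude
  intro i hi
  have hpos : ∀ t ∈ Ioo (0:ℝ) T, 0 < iteratedDeriv i y t := by
    intro t ht
    rcases eq_or_lt_of_le hi with rfl | hlt
    · exact hfpos t ⟨ht.1.le, ht.2⟩
    · exact key T hT le_rfl hfpos (d - i) i (by omega) t ht
  refine ⟨?_, hpos⟩
  apply strictMonoOn_of_deriv_pos (convex_Ico 0 T)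
  · exact (hcont i hi).continuousOn
  · intro x hx
    rw [interior_Ico] at hx
    have : 0 < iteratedDeriv (i + 1) y x := by
      rcases eq_or_lt_of_le hi with rfl | hlt
      · rw [hode x ⟨hx.1.le, hx.2⟩]
        have hy0 : 0 < y x := by
          have := key T hT le_rfl hfpos i 0 (by omega) x hx
          rwa [iteratedDeriv_zero] at this
        exact mul_pos hy0 (hfpos x ⟨hx.1.le, hx.2⟩)
      · exact key T hT le_rfl hfpos (d - (i + 1)) (i + 1) (by omega) x hx
    rwa [iteratedDeriv_succ] at this
end

section
/- A function z : [0,τ) → ℝ solves z^{(d+1)} = z·z^{(d)} with z^{(i)}(0)=0 for i < d and z^{(d)}(0)=1 if and only if its antiderivative x(t) = ∫₀ᵗ z(s)ds solves x^{(d+1)}(t) = exp(x(t)) with x^{(i)}(0) = 0 for all 0 ≤ i ≤ d. -/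
open Set

/-!
Since `x' = z`, the derivatives of `x` are shifted derivatives of `z`: `x⁽ⁱ⁺¹⁾ = z⁽ⁱ⁾`, and
`x(0) = 0`. So the claim reduces to the equivalence, for `y = z⁽ᵈ⁾`, of `y' = x' y` with
`y(0) = 1` and `y = exp x`. One direction holds because `y · exp (-x)` has derivative zero,
the other by differentiating `exp x`.
-/

theorem eqOn_mul_exp_of_hasDerivAt {x x' y : ℝ → ℝ} {a b : ℝ}
    (hx : ∀ t ∈ Ico a b, HasDerivAt x (x' t) t)
    (hy : ∀ t ∈ Ico a b, HasDerivAt y (x' t * y t) t) :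
    EqOn y (fun t => y a * Real.exp (x t - x a)) (Ico a b) := by
  set g : ℝ → ℝ := fun t => y t * Real.exp (-x t)
  have hg : ∀ t ∈ Ico a b, HasDerivAt g 0 t := fun t ht =>
    ((hy t ht).fun_mul (hx t ht).fun_neg.exp).congr_deriv (by ring)
  intro t ht
  have hsub : Icc a t ⊆ Ico a b := Icc_subset_Ico_right ht.2
  have hconst := constant_of_has_deriv_right_zero
    (fun s hs => (hg s (hsub hs)).continuousAt.continuousWithinAt)
    (fun s hs => (hg s (hsub (Ico_subset_Icc_self hs))).hasDerivWithinAt) t ⟨ht.1, le_rfl⟩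
  simp only [g] at hconst
  calc y t = y t * Real.exp (-x t) * Real.exp (x t) := by
        rw [mul_assoc, ← Real.exp_add, neg_add_cancel, Real.exp_zero, mul_one]
    _ = y a * Real.exp (x t - x a) := by
        rw [hconst, mul_assoc, ← Real.exp_add, neg_add_eq_sub]

theorem HasDerivAt.eq_of_eqOn_Ico {f g : ℝ → ℝ} {f' g' a b t : ℝ} (ht : t ∈ Ico a b)
    (hf : HasDerivAt f f' t) (hg : HasDerivAt g g' t) (hfg : EqOn f g (Ico a b)) : f' = g' :=
  (uniqueDiffOn_Ico a b t ht).eq_deriv _ hf.hasDerivWithinAt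
    (hg.hasDerivWithinAt.congr hfg (hfg ht))

theorem hasDerivAt_mul_and_eq_one_iff_eqOn_exp {x x' y y' : ℝ → ℝ} {a b : ℝ} (hab : a < b)
    (hx : ∀ t ∈ Ico a b, HasDerivAt x (x' t) t) (hy : ∀ t ∈ Ico a b, HasDerivAt y (y' t) t)
    (hxa : x a = 0) :
    ((∀ t ∈ Ico a b, y' t = x' t * y t) ∧ y a = 1) ↔ ∀ t ∈ Ico a b, y t = Real.exp (x t) := by
  have ha : a ∈ Ico a b := ⟨le_rfl, hab⟩
  constructor
  · rintro ⟨hode, hya⟩ t ht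
    have hy' : ∀ t ∈ Ico a b, HasDerivAt y (x' t * y t) t := fun t ht => hode t ht ▸ hy t ht
    simpa [hya, hxa] using eqOn_mul_exp_of_hasDerivAt hx hy' ht
  · intro hexp
    refine ⟨fun t ht => ?_, by rw [hexp a ha, hxa, Real.exp_zero]⟩
    rw [(hy t ht).eq_of_eqOn_Ico ht (hx t ht).exp hexp, hexp t ht, mul_comm]

theorem iteratedDeriv_succ_eq_of_deriv_eq {x z : ℝ → ℝ} (hxz : deriv x = z) (n : ℕ) :
    iteratedDeriv (n + 1) x = iteratedDeriv n z := by
  rw [iteratedDeriv_succ', hxz]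

theorem forall_le_iteratedDeriv_eq_zero_iff {x z : ℝ → ℝ} {a : ℝ} (hxz : deriv x = z)
    (hxa : x a = 0) (d : ℕ) :
    (∀ i ≤ d, iteratedDeriv i x a = 0) ↔ ∀ i < d, iteratedDeriv i z a = 0 := by
  constructor
  · intro h i hi
    rw [← iteratedDeriv_succ_eq_of_deriv_eq hxz]
    exact h (i + 1) hi
  · rintro h (_ | i) hi
    · simpa using hxa
    · rw [iteratedDeriv_succ_eq_of_deriv_eq hxz]
      exact h i hi

theorem stmt_4_general (d : ℕ) (τ : ℝ) (hτ : 0 < τ)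
    (z x : ℝ → ℝ) (hz : ContDiff ℝ (d + 1) z)
    (hx : ∀ t, x t = ∫ s in (0 : ℝ)..t, z s) :
    ((∀ t ∈ Ico (0 : ℝ) τ,
        iteratedDeriv (d + 1) z t = z t * iteratedDeriv d z t) ∧
      (∀ i < d, iteratedDeriv i z 0 = 0) ∧ iteratedDeriv d z 0 = 1) ↔
    ((∀ t ∈ Ico (0 : ℝ) τ, iteratedDeriv (d + 1) x t = Real.exp (x t)) ∧
      ∀ i ≤ d, iteratedDeriv i x 0 = 0) := by
  have hxz : ∀ t, HasDerivAt x (z t) t := by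
    rw [show x = fun t => ∫ s in (0 : ℝ)..t, z s from funext hx]
    exact fun t => (hz.continuous.integral_hasStrictDerivAt 0 t).hasDerivAt
  have hderiv : deriv x = z := funext fun t => (hxz t).deriv
  have hx0 : x 0 = 0 := by simp [hx]
  have hzd : ∀ t, HasDerivAt (iteratedDeriv d z) (iteratedDeriv (d + 1) z t) t := fun t => by
    rw [iteratedDeriv_succ]
    exact ((hz.differentiable_iteratedDeriv d (by norm_cast; omega)) t).hasDerivAt
  rw [iteratedDeriv_succ_eq_of_deriv_eq hderiv, forall_le_iteratedDeriv_eq_zero_iff hderiv hx0,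
    ← and_assoc, and_right_comm, hasDerivAt_mul_and_eq_one_iff_eqOn_exp hτ
      (fun t _ => hxz t) (fun t _ => hzd t) hx0]

/-- z solves z^{(d+1)} = z·z^{(d)} with z^{(i)}(0)=0 (i<d),
z^{(d)}(0)=1 on [0,τ) iff its antiderivative x(t) = ∫₀ᵗ z solves
x^{(d+1)} = exp(x) with x^{(i)}(0) = 0 for all 0 ≤ i ≤ d. -/
theorem stmt_4 (d : ℕ) (hd : 1 ≤ d) (τ : ℝ) (hτ : 0 < τ)
    (z x : ℝ → ℝ) (hz : ContDiff ℝ (d + 1) z)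
    (hx : ∀ t, x t = ∫ s in (0 : ℝ)..t, z s) :
    ((∀ t ∈ Ico (0 : ℝ) τ,
        iteratedDeriv (d + 1) z t = z t * iteratedDeriv d z t) ∧
      (∀ i < d, iteratedDeriv i z 0 = 0) ∧ iteratedDeriv d z 0 = 1) ↔
    ((∀ t ∈ Ico (0 : ℝ) τ, iteratedDeriv (d + 1) x t = Real.exp (x t)) ∧
      ∀ i ≤ d, iteratedDeriv i x 0 = 0) :=
  stmt_4_general d τ hτ z x hz hx
end

section
/- For any continuous function f : [0,T) → ℝ and any t ∈ [0,T), we have ∫₀ᵗ ((t−s)^d / d!) · f(s) ds = the d-fold iterated integral of the single integral of f; consequently, if y solves the Cauchy problem y^{(d+1)} = y·y^{(d)} with y^{(i)}(0)=0 for i<d and y^{(d)}(0)=1, then exp(∫₀ᵗ ((t−s)^d / d!)·y^{(d)}(s) ds) = y^{(d)}(t) for all t ∈ [0,T). -/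
open Set

/-!
Integrating by parts against the kernel `(t - s) ^ (n + 1) / (n + 1)!` moves one primitive onto
`f`, which gives Cauchy's formula for repeated integration. When `f = y⁽ᵈ⁾` with
`y(0) = ⋯ = y⁽ᵈ⁻¹⁾(0) = 0`, the `d + 1` primitives collapse to the single primitive of `y`, so
`z := y⁽ᵈ⁾` solves the linear equation `z' = y z`, `z 0 = 1`, whose solution is
`exp (∫₀ᵗ y)` since `z · exp (-∫₀ˢ y)` has vanishing derivative.
-/

noncomputable def primitiveFromZero (g : ℝ → ℝ) (t : ℝ) : ℝ := ∫ s in (0 : ℝ)..t, g s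

namespace primitiveFromZero

@[simp]
lemma apply_zero (g : ℝ → ℝ) : primitiveFromZero g 0 = 0 :=
  intervalIntegral.integral_same

lemma hasDerivAt {g : ℝ → ℝ} (hg : Continuous g) (t : ℝ) :
    HasDerivAt (primitiveFromZero g) (g t) t :=
  intervalIntegral.integral_hasDerivAt_right (hg.intervalIntegrable _ _)
    hg.stronglyMeasurable.stronglyMeasurableAtFilter hg.continuousAt

lemma continuous {g : ℝ → ℝ} (hg : Continuous g) : Continuous (primitiveFromZero g) :=
  intervalIntegral.continuous_primitive (fun a b => hg.intervalIntegrable a b) 0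

lemma deriv_eq_sub {y : ℝ → ℝ} (hy : ContDiff ℝ 1 y) (t : ℝ) :
    primitiveFromZero (deriv y) t = y t - y 0 :=
  intervalIntegral.integral_deriv_eq_sub (fun x _ => hy.differentiable one_ne_zero x)
    ((hy.continuous_deriv le_rfl).intervalIntegrable 0 t)

lemma iterate_eqOn {g₁ g₂ : ℝ → ℝ} {t : ℝ} (h : EqOn g₁ g₂ (Icc 0 t)) (n : ℕ) :
    EqOn (primitiveFromZero^[n] g₁) (primitiveFromZero^[n] g₂) (Icc 0 t) := by
  induction n with
  | zero => exact h
  | succ n ih =>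
    intro s hs
    simp only [Function.iterate_succ_apply']
    refine intervalIntegral.integral_congr fun x hx => ih ?_
    rw [uIcc_of_le hs.1] at hx
    exact ⟨hx.1, hx.2.trans hs.2⟩

lemma iterate_iteratedDeriv {n : ℕ} {y : ℝ → ℝ} (hy : ContDiff ℝ n y)
    (hic : ∀ i < n, iteratedDeriv i y 0 = 0) :
    primitiveFromZero^[n] (iteratedDeriv n y) = y := by
  induction n generalizing y with
  | zero => simp
  | succ n ih =>
    have hy' : ContDiff ℝ n (deriv y) := (contDiff_succ_iff_deriv.1 hy).2.2
    have hic' : ∀ i < n, iteratedDeriv i (deriv y) 0 = 0 := fun i hi => by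
      rw [← iteratedDeriv_succ']; exact hic (i + 1) (by omega)
    have hy0 : y 0 = 0 := by simpa using hic 0 n.succ_pos
    funext t
    rw [iteratedDeriv_succ', Function.iterate_succ_apply', ih hy' hic',
      deriv_eq_sub (hy.of_le (by exact_mod_cast n.succ_pos)), hy0, sub_zero]

end primitiveFromZero

open primitiveFromZero

lemma hasDerivAt_sub_pow_succ_div_factorial (n : ℕ) (t x : ℝ) :
    HasDerivAt (fun s => (t - s) ^ (n + 1) / (n + 1).factorial)
      (-((t - x) ^ n / n.factorial)) x := by
  refine ((((hasDerivAt_id' x).const_sub t).pow (n + 1)).div_const _).congr_deriv ?_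
  push_cast [Nat.factorial_succ, Nat.add_sub_cancel]
  field_simp

lemma integral_sub_pow_succ_div_factorial_mul {g : ℝ → ℝ} (hg : Continuous g) (n : ℕ) (t : ℝ) :
    ∫ s in (0 : ℝ)..t, (t - s) ^ (n + 1) / (n + 1).factorial * g s =
      ∫ s in (0 : ℝ)..t, (t - s) ^ n / n.factorial * primitiveFromZero g s := by
  have hparts := intervalIntegral.integral_mul_deriv_eq_deriv_mul
    (fun x _ => hasDerivAt_sub_pow_succ_div_factorial n t x) (fun x _ => hasDerivAt hg x)
    ((by fun_prop : Continuous fun x : ℝ => -((t - x) ^ n / n.factorial)).intervalIntegrable 0 t)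
    (hg.intervalIntegrable 0 t)
  simpa only [sub_self, apply_zero, mul_zero, sub_zero, zero_pow n.succ_ne_zero, zero_div,
    zero_mul, zero_sub, neg_mul, intervalIntegral.integral_neg, neg_neg] using hparts

theorem integral_sub_pow_div_factorial_mul {g : ℝ → ℝ} (hg : Continuous g) (n : ℕ) (t : ℝ) :
    ∫ s in (0 : ℝ)..t, (t - s) ^ n / n.factorial * g s =
      primitiveFromZero^[n] (primitiveFromZero g) t := by
  induction n generalizing g with
  | zero => simp [primitiveFromZero]
  | succ n ih =>
    rw [integral_sub_pow_succ_div_factorial_mul hg, ih (continuous hg),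
      Function.iterate_succ_apply]

theorem integral_sub_pow_div_factorial_mul_of_continuousOn {f : ℝ → ℝ} {t : ℝ} (ht : 0 ≤ t)
    (hf : ContinuousOn f (Icc 0 t)) (n : ℕ) :
    ∫ s in (0 : ℝ)..t, (t - s) ^ n / n.factorial * f s =
      primitiveFromZero^[n] (primitiveFromZero f) t := by
  set g := IccExtend ht ((Icc 0 t).domRestrict f)
  have hg : Continuous g :=
    continuous_IccExtend_iff.2 (continuousOn_iff_continuous_domRestrict.1 hf)
  have hgf : EqOn g f (Icc 0 t) := fun s hs => IccExtend_of_mem ht _ hs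
  calc ∫ s in (0 : ℝ)..t, (t - s) ^ n / n.factorial * f s
      = ∫ s in (0 : ℝ)..t, (t - s) ^ n / n.factorial * g s :=
        intervalIntegral.integral_congr fun s hs => by
          rw [uIcc_of_le ht] at hs; rw [hgf hs]
    _ = primitiveFromZero^[n + 1] g t := integral_sub_pow_div_factorial_mul hg n t
    _ = primitiveFromZero^[n + 1] f t := iterate_eqOn hgf (n + 1) (right_mem_Icc.2 ht)

theorem eq_mul_exp_integral_of_hasDerivAt {a z : ℝ → ℝ} {t : ℝ} (ht : 0 ≤ t)
    (ha : Continuous a) (hz : Continuous z)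
    (hderiv : ∀ s ∈ Ico 0 t, HasDerivAt z (a s * z s) s) :
    z t = z 0 * Real.exp (∫ s in (0 : ℝ)..t, a s) := by
  set w := fun s => z s * Real.exp (-primitiveFromZero a s)
  have hw : ∀ s ∈ Ico 0 t, HasDerivWithinAt w 0 (Ici s) s := fun s hs => by
    refine ((hderiv s hs).mul (hasDerivAt ha s).neg.exp).hasDerivWithinAt.congr_deriv ?_
    ring
  have hwc : ContinuousOn w (Icc 0 t) := (hz.mul (continuous ha).neg.rexp).continuousOn
  have hwt : w t = w 0 := constant_of_has_deriv_right_zero hwc hw t (right_mem_Icc.2 ht)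
  simp only [w, apply_zero, Real.exp_neg, Real.exp_zero, inv_one, mul_one] at hwt
  rw [← hwt, primitiveFromZero, inv_mul_cancel_right₀ (Real.exp_ne_zero _)]

theorem stmt_6_general (d : ℕ) (T : ℝ)
    (J : (ℝ → ℝ) → ℝ → ℝ) (hJ : ∀ g t, J g t = ∫ s in (0 : ℝ)..t, g s)
    (y : ℝ → ℝ) (hy : ContDiff ℝ (d + 1) y)
    (hode : ∀ t ∈ Ico (0 : ℝ) T,
      iteratedDeriv (d + 1) y t = y t * iteratedDeriv d y t)
    (hic : ∀ i < d, iteratedDeriv i y 0 = 0)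
    (hicd : iteratedDeriv d y 0 = 1) :
    (∀ f : ℝ → ℝ, ContinuousOn f (Ico (0 : ℝ) T) → ∀ t ∈ Ico (0 : ℝ) T,
      (∫ s in (0 : ℝ)..t, (t - s) ^ d / (Nat.factorial d) * f s) =
        (J^[d]) (J f) t) ∧
    (∀ t ∈ Ico (0 : ℝ) T,
      Real.exp (∫ s in (0 : ℝ)..t,
          (t - s) ^ d / (Nat.factorial d) * iteratedDeriv d y s) =
        iteratedDeriv d y t) := by
  obtain rfl : J = primitiveFromZero := funext₂ hJ
  refine ⟨fun f hf t ht => integral_sub_pow_div_factorial_mul_of_continuousOn ht.1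
    (hf.mono (Icc_subset_Ico_right ht.2)) d, fun t ht => ?_⟩
  have hlt : (d : WithTop ℕ∞) < d + 1 := by exact_mod_cast d.lt_succ_self
  have hz : Continuous (iteratedDeriv d y) := hy.continuous_iteratedDeriv d hlt.le
  have hzderiv : ∀ s ∈ Ico 0 t, HasDerivAt (iteratedDeriv d y) (y s * iteratedDeriv d y s) s :=
    fun s hs => by
      rw [← hode s ⟨hs.1, hs.2.trans ht.2⟩, iteratedDeriv_succ]
      exact (hy.differentiable_iteratedDeriv d hlt s).hasDerivAt
  rw [integral_sub_pow_div_factorial_mul hz, ← Function.iterate_succ_apply,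
    Function.iterate_succ_apply', iterate_iteratedDeriv (hy.of_le hlt.le) hic,
    eq_mul_exp_integral_of_hasDerivAt ht.1 hy.continuous hz hzderiv, hicd, one_mul,
    primitiveFromZero]

/-- For continuous f and t ∈ [0,T), ∫₀ᵗ ((t−s)^d/d!)·f(s) ds equals
the d-fold iterated integral of the single integral of f; consequently, for a
solution y of the Cauchy problem, exp(∫₀ᵗ ((t−s)^d/d!)·y^{(d)}(s) ds) = y^{(d)}(t). -/
theorem stmt_6 (d : ℕ) (hd : 1 ≤ d) (T : ℝ) (hT : 0 < T)
    (J : (ℝ → ℝ) → ℝ → ℝ) (hJ : ∀ g t, J g t = ∫ s in (0 : ℝ)..t, g s)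
    (y : ℝ → ℝ) (hy : ContDiff ℝ (d + 1) y)
    (hode : ∀ t ∈ Ico (0 : ℝ) T,
      iteratedDeriv (d + 1) y t = y t * iteratedDeriv d y t)
    (hic : ∀ i < d, iteratedDeriv i y 0 = 0)
    (hicd : iteratedDeriv d y 0 = 1) :
    (∀ f : ℝ → ℝ, ContinuousOn f (Ico (0 : ℝ) T) → ∀ t ∈ Ico (0 : ℝ) T,
      (∫ s in (0 : ℝ)..t, (t - s) ^ d / (Nat.factorial d) * f s) =
        (J^[d]) (J f) t) ∧
    (∀ t ∈ Ico (0 : ℝ) T,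
      Real.exp (∫ s in (0 : ℝ)..t,
          (t - s) ^ d / (Nat.factorial d) * iteratedDeriv d y s) =
        iteratedDeriv d y t) :=
  stmt_6_general d T J hJ y hy hode hic hicd
end

section
/- Let x : [0,T) → ℝ solve x^{(d+1)}(t) = exp(x(t)) with x(0) = ⋯ = x^{(d)}(0) = 0, and suppose all derivatives x', ..., x^{(d)} are nonnegative on [0,T). If x(t_n) = n for an increasing sequence t_0 = 0 < t_1 < t_2 < ⋯ in [0,T), then t_{n+1} − t_n ≤ ((d+1)!·e^{−n})^{1/(d+1)} for all n. -/
open Set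
open scoped ENNReal Nat

/-!
On `[t n, t (n+1)]` expand `x` by Taylor's formula of order `d` at `t n` with Lagrange remainder.
All terms of order `1, …, d` are nonnegative, and the remainder involves
`x^{(d+1)}(c) = exp (x c) ≥ exp n` because `x` is nondecreasing. Hence
`1 = x (t (n+1)) - x (t n) ≥ exp n * (t (n+1) - t n) ^ (d+1) / (d+1)!`.
-/

lemma le_taylorWithinEval_of_iteratedDeriv_nonneg {f : ℝ → ℝ} {n : ℕ} (hf : ContDiff ℝ n f)
    {a b : ℝ} (hab : a < b) (hf' : ∀ i, 1 ≤ i → i ≤ n → 0 ≤ iteratedDeriv i f a) :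
    f a ≤ taylorWithinEval f n (Icc a b) a b := by
  rw [taylor_within_apply, Finset.sum_range_succ', pow_zero, Nat.factorial_zero, Nat.cast_one,
    inv_one, one_mul, one_smul, iteratedDerivWithin_zero, le_add_iff_nonneg_left]
  refine Finset.sum_nonneg fun i hi => smul_nonneg (by positivity [hab.le]) ?_
  have hi : i + 1 ≤ n := Finset.mem_range.1 hi
  rw [iteratedDerivWithin_eq_iteratedDeriv (uniqueDiffOn_Icc hab)
    ((hf.of_le (by exact_mod_cast hi)).contDiffAt) (left_mem_Icc.2 hab.le)]
  exact hf' (i + 1) le_add_self hi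

theorem add_mul_pow_div_factorial_le_of_iteratedDeriv_nonneg {f : ℝ → ℝ} {n : ℕ}
    (hf : ContDiff ℝ (n + 1) f) {a b m : ℝ} (hab : a < b)
    (hf' : ∀ i, 1 ≤ i → i ≤ n → 0 ≤ iteratedDeriv i f a)
    (hm : ∀ c ∈ Ioo a b, m ≤ iteratedDeriv (n + 1) f c) :
    f a + m * (b - a) ^ (n + 1) / (n + 1)! ≤ f b := by
  obtain ⟨c, hc, hrem⟩ := taylor_mean_remainder_lagrange_iteratedDeriv hab.ne hf.contDiffOn
  rw [uIoo_of_lt hab] at hc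
  rw [uIcc_of_le hab.le] at hrem
  have htaylor := le_taylorWithinEval_of_iteratedDeriv_nonneg (hf.of_le (by simp)) hab hf'
  have hremainder : m * (b - a) ^ (n + 1) / (n + 1)! ≤
      iteratedDeriv (n + 1) f c * (b - a) ^ (n + 1) / (n + 1)! := by
    gcongr
    exact hm c hc
  linarith

lemma le_rpow_one_div_of_pow_le {x y : ℝ} (hx : 0 ≤ x) {n : ℕ} (h : x ^ (n + 1) ≤ y) :
    x ≤ y ^ ((1 : ℝ) / (n + 1)) := by
  have hy : 0 ≤ y := (pow_nonneg hx _).trans h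
  rw [one_div, Real.le_rpow_inv_iff_of_pos hx hy (by positivity)]
  exact_mod_cast h

theorem stmt_7_general (d : ℕ) (hd : 1 ≤ d) (T : ℝ≥0∞)
    (x : ℝ → ℝ) (hx : ContDiff ℝ (d + 1) x)
    (hode : ∀ t : ℝ, 0 ≤ t → ENNReal.ofReal t < T →
      iteratedDeriv (d + 1) x t = Real.exp (x t))
    (hnonneg : ∀ i, 1 ≤ i → i ≤ d → ∀ t : ℝ, 0 ≤ t → ENNReal.ofReal t < T →
      0 ≤ iteratedDeriv i x t)
    (t : ℕ → ℝ) (htmono : StrictMono t)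
    (htdom : ∀ n, 0 ≤ t n ∧ ENNReal.ofReal (t n) < T)
    (hlevel : ∀ n : ℕ, x (t n) = n) :
    ∀ n : ℕ, t (n + 1) - t n ≤
      ((Nat.factorial (d + 1) : ℝ) * Real.exp (-(n : ℝ))) ^
        ((1 : ℝ) / (d + 1)) := by
  intro n
  have hab : t n < t (n + 1) := htmono n.lt_succ_self
  have hdom : ∀ s ∈ Icc (t n) (t (n + 1)), 0 ≤ s ∧ ENNReal.ofReal s < T := fun s hs =>
    ⟨(htdom n).1.trans hs.1, (ENNReal.ofReal_le_ofReal hs.2).trans_lt (htdom (n + 1)).2⟩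
  have hmono : MonotoneOn x (Icc (t n) (t (n + 1))) := by
    refine monotoneOn_of_deriv_nonneg (convex_Icc _ _) hx.continuous.continuousOn
      (hx.differentiable (by simp)).differentiableOn fun s hs => ?_
    rw [interior_Icc] at hs
    obtain ⟨hs0, hsT⟩ := hdom s (Ioo_subset_Icc_self hs)
    rw [← iteratedDeriv_one]
    exact hnonneg 1 le_rfl hd s hs0 hsT
  have hgrowth := add_mul_pow_div_factorial_le_of_iteratedDeriv_nonneg (m := Real.exp n) hx hab
    (fun i hi hid => hnonneg i hi hid _ (htdom n).1 (htdom n).2) fun c hc => by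
      obtain ⟨hc0, hcT⟩ := hdom c (Ioo_subset_Icc_self hc)
      rw [hode c hc0 hcT, Real.exp_le_exp, ← hlevel n]
      exact hmono (left_mem_Icc.2 hab.le) (Ioo_subset_Icc_self hc) hc.1.le
  rw [hlevel, hlevel, Nat.cast_succ] at hgrowth
  have hstep : Real.exp n * (t (n + 1) - t n) ^ (d + 1) / (d + 1)! ≤ 1 := by linarith
  refine le_rpow_one_div_of_pow_le (sub_nonneg.2 hab.le) ?_
  rw [Real.exp_neg, ← div_eq_mul_inv, le_div_iff₀ (Real.exp_pos _)]
  rw [div_le_one (by positivity)] at hstep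
  linarith

/-- gap bound for the level-crossing times of a solution of
x^{(d+1)} = exp(x) with vanishing initial data and nonnegative derivatives,
on [0,T) where T ∈ (0,∞]. -/
theorem stmt_7 (d : ℕ) (hd : 1 ≤ d) (T : ℝ≥0∞) (hT : 0 < T)
    (x : ℝ → ℝ) (hx : ContDiff ℝ (d + 1) x)
    (hode : ∀ t : ℝ, 0 ≤ t → ENNReal.ofReal t < T →
      iteratedDeriv (d + 1) x t = Real.exp (x t))
    (hic : ∀ i ≤ d, iteratedDeriv i x 0 = 0)
    (hnonneg : ∀ i, 1 ≤ i → i ≤ d → ∀ t : ℝ, 0 ≤ t → ENNReal.ofReal t < T →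
      0 ≤ iteratedDeriv i x t)
    (t : ℕ → ℝ) (ht0 : t 0 = 0) (htmono : StrictMono t)
    (htdom : ∀ n, 0 ≤ t n ∧ ENNReal.ofReal (t n) < T)
    (hlevel : ∀ n : ℕ, x (t n) = n) :
    ∀ n : ℕ, t (n + 1) - t n ≤
      ((Nat.factorial (d + 1) : ℝ) * Real.exp (-(n : ℝ))) ^
        ((1 : ℝ) / (d + 1)) :=
  stmt_7_general d hd T x hx hode hnonneg t htmono htdom hlevel
end

section
/- Consider the Lotka–Volterra system on ℝ^d: w_i' = w_i(w_{i+1} − w_1 − w_i) for 1 ≤ i ≤ d−1, and w_d' = w_d(1 − w_1 − w_d). Any maximal solution with initial condition in the open positive orthant (0,∞)^d remains in (0,∞)^d, is bounded (each coordinate by max(w_1(0),...,w_d(0),1)), and is global (defined on all of ℝ₊). -/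
/-!
A coordinate `w_i` solves the linear equation `y' = g(t) y` with the continuous rate
`g = w_{i+1} - w_1 - w_i`, so it cannot reach `0`. Given positivity, the bound
`M = max 1 (max_j w_j(0))` propagates from the last coordinate backwards: where `w_i = M` and
`w_{i+1} ≤ M`, `w_i' = M (w_{i+1} - w_1 - M) < 0`. A solution confined to a compact set has a
bounded derivative, hence a limit at a finite end of its interval of existence, where
Picard–Lindelöf continues it; so the maximal solution is global.
-/

open Set Filter Topology
open scoped ENNReal

theorem pos_of_hasDerivWithinAt_mul_self {f g : ℝ → ℝ} {a b : ℝ} (hab : a ≤ b)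
    (hf : ContinuousOn f (Icc a b))
    (hf' : ∀ t ∈ Ioc a b, HasDerivWithinAt f (g t * f t) (Iic t) t)
    (hg : ContinuousOn g (Icc a b)) (ha : 0 < f a) : 0 < f b := by
  by_contra! hb
  obtain ⟨c, hc, hfc⟩ := intermediate_value_Icc' hab hf ⟨hb, ha.le⟩
  have hac : Icc a c ⊆ Icc a b := Icc_subset_Icc_right hc.2
  obtain ⟨K, hK⟩ := isCompact_Icc.exists_bound_of_continuousOn (hg.mono hac)
  -- `f` and `0` solve the same linear equation `y' = g t * y` and agree at `c`
  have hf0 : EqOn f 0 (Icc a c) :=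
    ODE_solution_unique_of_mem_Icc_left (v := fun t y => g t * y) (s := fun _ => univ)
      (K := K.toNNReal) (g := fun _ => 0)
      (fun t ht => ((lipschitzWith_smul (g t)).weaken (by
        rw [← NNReal.coe_le_coe, coe_nnnorm]
        exact (hK t (Ioc_subset_Icc_self ht)).trans (Real.le_coe_toNNReal K))).lipschitzOnWith)
      (hf.mono hac) (fun t ht => hf' t ⟨ht.1, ht.2.trans hc.2⟩) (fun _ _ => trivial)
      continuousOn_const (fun t _ => by simpa using hasDerivWithinAt_const t (Iic t) (0 : ℝ))
      (fun _ _ => trivial) hfc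
  exact ha.ne' (hf0 ⟨le_rfl, hc.1⟩)

theorem UniformContinuousOn.exists_tendsto_nhdsWithin {α β : Type*} [UniformSpace α]
    [UniformSpace β] [CompleteSpace β] {f : α → β} {s : Set α} {x : α}
    (hf : UniformContinuousOn f s) (hx : x ∈ closure s) : ∃ L, Tendsto f (𝓝[s] x) (𝓝 L) := by
  have : NeBot (𝓝[s] x) := mem_closure_iff_nhdsWithin_neBot.1 hx
  exact cauchy_map_iff_exists_tendsto.1
    ((cauchy_nhds.mono nhdsWithin_le_nhds).map_of_le hf inf_le_right)

section Extension

variable {E : Type*} [NormedAddCommGroup E] [NormedSpace ℝ E] [CompleteSpace E]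
  {F : E → E} {w : ℝ → E} {a T : ℝ} {K : Set E}

theorem exists_tendsto_nhdsLT_of_mapsTo_isCompact (hF : Continuous F) (haT : a < T)
    (hw : ∀ t ∈ Ico a T, HasDerivWithinAt w (F (w t)) (Ici a) t) (hK : IsCompact K)
    (hwK : MapsTo w (Ico a T) K) : ∃ L, Tendsto w (𝓝[<] T) (𝓝 L) := by
  obtain ⟨C, hC⟩ := hK.exists_bound_of_continuousOn hF.continuousOn
  have hLip : LipschitzOnWith C.toNNReal w (Ico a T) :=
    (convex_Ico a T).lipschitzOnWith_of_nnnorm_hasDerivWithin_le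
      (fun t ht => (hw t ht).mono Ico_subset_Ici_self)
      (fun t ht => by
        rw [← NNReal.coe_le_coe, coe_nnnorm]
        exact (hC _ (hwK ht)).trans (Real.le_coe_toNNReal C))
  rw [← nhdsWithin_Ico_eq_nhdsLT haT]
  exact hLip.uniformContinuousOn.exists_tendsto_nhdsWithin
    (by rw [closure_Ico haT.ne]; exact right_mem_Icc.2 haT.le)

theorem exists_extension_of_mapsTo_isCompact (hF : ContDiff ℝ 1 F) (haT : a < T)
    (hw : ∀ t ∈ Ico a T, HasDerivWithinAt w (F (w t)) (Ici a) t) (hK : IsCompact K)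
    (hwK : MapsTo w (Ico a T) K) :
    ∃ T' > T, ∃ z : ℝ → E,
      (∀ t ∈ Ico a T', HasDerivWithinAt z (F (z t)) (Ici a) t) ∧ EqOn z w (Ico a T) := by
  obtain ⟨L, hL⟩ := exists_tendsto_nhdsLT_of_mapsTo_isCompact hF.continuous haT hw hK hwK
  obtain ⟨ψ, hψT, ε, hε, hψ⟩ :=
    hF.contDiffAt.exists_forall_mem_closedBall_exists_eq_forall_mem_Ioo_hasDerivAt₀ T
  set z : ℝ → E := fun t => if t < T then w t else ψ t
  have hzw : EqOn z w (Iio T) := fun t ht => if_pos ht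
  have hzψ : EqOn z ψ (Ici T) := fun t ht => if_neg (not_lt.2 ht)
  have hderiv_lt : ∀ t ∈ Ioo a T, HasDerivAt z (F (w t)) t := fun t ht =>
    ((hw t ⟨ht.1.le, ht.2⟩).hasDerivAt (Ici_mem_nhds ht.1)).congr_of_eventuallyEq
      (eventually_of_mem (Iio_mem_nhds ht.2) hzw)
  have hzT : z T = L := (hzψ self_mem_Ici).trans hψT
  have hleft : HasDerivWithinAt z (F L) (Iic T) T := by
    refine hasDerivWithinAt_Iic_of_tendsto_deriv (s := Ioo a T)
      (fun t ht => (hderiv_lt t ht).differentiableAt.differentiableWithinAt) ?_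
      (Ioo_mem_nhdsLT haT) ?_
    · rw [ContinuousWithinAt, hzT, nhdsWithin_Ioo_eq_nhdsLT haT]
      exact hL.congr' (eventually_nhdsWithin_of_forall fun t ht => (hzw ht).symm)
    · refine ((hF.continuous.tendsto L).comp hL).congr' ?_
      filter_upwards [Ioo_mem_nhdsLT haT] with t ht
      exact (hderiv_lt t ht).deriv.symm
  have hright : HasDerivWithinAt z (F L) (Ici T) T := by
    rw [← hψT]
    exact (hψ T ⟨by linarith, by linarith⟩).hasDerivWithinAt.congr hzψ (hzψ self_mem_Ici)
  have hderivT : HasDerivAt z (F (z T)) T := by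
    rw [hzT, ← hasDerivWithinAt_univ, ← Iic_union_Ici]
    exact hleft.union hright
  refine ⟨T + ε, by linarith, z, fun t ht => ?_, hzw.mono Ico_subset_Iio_self⟩
  rcases lt_trichotomy t T with htT | rfl | hTt
  · rw [hzw htT]
    exact (hw t ⟨ht.1, htT⟩).congr_of_eventuallyEq
      (eventually_nhdsWithin_of_eventually_nhds (eventually_of_mem (Iio_mem_nhds htT) hzw))
      (hzw htT)
  · exact hderivT.hasDerivWithinAt
  · rw [hzψ hTt.le]
    refine ((hψ t ⟨by linarith, ht.2⟩).congr_of_eventuallyEq ?_).hasDerivWithinAt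
    exact eventually_of_mem (Ioi_mem_nhds hTt) fun s hs => hzψ (Ioi_subset_Ici_self hs)

end Extension

section LotkaVolterra

variable {d : ℕ} (hd : 0 < d)

/-- `w_{i+1}`, with `w_{d+1} := 1` so that the last equation has the same shape as the others. -/
def lvNext (v : Fin d → ℝ) (i : Fin d) : ℝ :=
  if h : (i : ℕ) + 1 < d then v ⟨i + 1, h⟩ else 1

def lotkaVolterra (v : Fin d → ℝ) (i : Fin d) : ℝ :=
  v i * (lvNext v i - v ⟨0, hd⟩ - v i)

@[fun_prop]
theorem contDiff_lvNext {n : WithTop ℕ∞} (i : Fin d) :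
    ContDiff ℝ n fun v : Fin d → ℝ => lvNext v i := by
  unfold lvNext
  split_ifs
  exacts [contDiff_apply ℝ ℝ _, contDiff_const]

theorem contDiff_lotkaVolterra {n : WithTop ℕ∞} : ContDiff ℝ n (lotkaVolterra hd) :=
  contDiff_pi.2 fun i => by unfold lotkaVolterra; fun_prop

variable {hd} {w : ℝ → Fin d → ℝ} {t : ℝ}

theorem lotkaVolterra_pos
    (hw : ∀ s ∈ Icc 0 t, HasDerivWithinAt w (lotkaVolterra hd (w s)) (Ici 0) s)
    (ht : 0 ≤ t) (h0 : ∀ i, 0 < w 0 i) (i : Fin d) : 0 < w t i := by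
  have hwc : ContinuousOn w (Icc 0 t) := fun s hs =>
    (hw s hs).continuousWithinAt.mono Icc_subset_Ici_self
  have hrate : Continuous fun v : Fin d → ℝ => lvNext v i - v ⟨0, hd⟩ - v i := by fun_prop
  refine pos_of_hasDerivWithinAt_mul_self (g := fun s => lvNext (w s) i - w s ⟨0, hd⟩ - w s i)
    ht ((continuous_apply i).comp_continuousOn hwc) (fun s hs => ?_)
    (hrate.comp_continuousOn hwc) (h0 i)
  rw [mul_comm]
  exact (hasDerivWithinAt_pi.1 ((hw s (Ioc_subset_Icc_self hs)).hasDerivAt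
    (Ici_mem_nhds hs.1)).hasDerivWithinAt i)

theorem lotkaVolterra_le
    (hw : ∀ s ∈ Icc 0 t, HasDerivWithinAt w (lotkaVolterra hd (w s)) (Ici 0) s)
    (h0 : ∀ i, 0 < w 0 i) {M : ℝ} (hM : 1 ≤ M) (hM0 : ∀ i, w 0 i ≤ M) (i : Fin d) :
    ∀ s ∈ Icc 0 t, w s i ≤ M := by
  induction i using WellFoundedGT.induction with
  | _ i ih =>
    intro s hs
    have hws : ∀ r ∈ Icc 0 s, HasDerivWithinAt w (lotkaVolterra hd (w r)) (Ici 0) r :=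
      fun r hr => hw r (Icc_subset_Icc_right hs.2 hr)
    have hnext : ∀ r ∈ Icc 0 s, lvNext (w r) i ≤ M := fun r hr => by
      unfold lvNext
      split_ifs with h
      exacts [ih _ (Fin.lt_def.2 (Nat.lt_succ_self _)) r (Icc_subset_Icc_right hs.2 hr), hM]
    refine image_le_of_deriv_right_lt_deriv_boundary (B := fun _ => M)
      ((continuous_apply i).comp_continuousOn fun r hr =>
        (hws r hr).continuousWithinAt.mono Icc_subset_Ici_self)
      (fun r hr => (hasDerivWithinAt_pi.1 ((hws r (Ico_subset_Icc_self hr)).mono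
        (Ici_subset_Ici.2 hr.1)) i))
      (hM0 i) (fun _ => hasDerivAt_const _ M) (fun r hr hrM => ?_) (right_mem_Icc.2 hs.1)
    have hpos := lotkaVolterra_pos (fun q hq => hws q (Icc_subset_Icc_right hr.2.le hq)) hr.1 h0
    change w r i = M at hrM
    change lotkaVolterra hd (w r) i < 0
    rw [lotkaVolterra, hrM]
    exact mul_neg_of_pos_of_neg (by linarith)
      (by linarith [hnext r (Ico_subset_Icc_self hr), hpos ⟨0, hd⟩])

end LotkaVolterra

/-- positivity, boundedness and globality of maximal solutions of
the Lotka–Volterra system with initial condition in the open positive orthant. -/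
theorem stmt_15 (d : ℕ) (hd : 0 < d)
    (F : (Fin d → ℝ) → Fin d → ℝ)
    (hF : ∀ v i, F v i =
      if h : (i : ℕ) + 1 < d then v i * (v ⟨(i : ℕ) + 1, h⟩ - v ⟨0, hd⟩ - v i)
      else v i * (1 - v ⟨0, hd⟩ - v i))
    (τ : ℝ≥0∞) (hτ : 0 < τ) (w : ℝ → Fin d → ℝ)
    (hode : ∀ t : ℝ, 0 ≤ t → ENNReal.ofReal t < τ → ∀ i,
      HasDerivWithinAt (fun s => w s i) (F (w t) i) (Ici (0 : ℝ)) t)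
    (hinit : ∀ i, 0 < w 0 i)
    (hmax : ∀ (τ' : ℝ≥0∞) (z : ℝ → Fin d → ℝ), τ < τ' →
      (∀ t : ℝ, 0 ≤ t → ENNReal.ofReal t < τ' → ∀ i,
        HasDerivWithinAt (fun s => z s i) (F (z t) i) (Ici (0 : ℝ)) t) →
      (∀ t : ℝ, 0 ≤ t → ENNReal.ofReal t < τ → z t = w t) → False) :
    (∀ t : ℝ, 0 ≤ t → ENNReal.ofReal t < τ → ∀ i,
      0 < w t i ∧ w t i ≤ max 1 (⨆ j, w 0 j)) ∧ τ = ⊤ := by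
  obtain rfl : F = lotkaVolterra hd := funext₂ fun v i => by
    rw [hF, lotkaVolterra, lvNext]
    split_ifs <;> rfl
  have hsol : ∀ t, ENNReal.ofReal t < τ →
      ∀ s ∈ Icc 0 t, HasDerivWithinAt w (lotkaVolterra hd (w s)) (Ici 0) s :=
    fun t ht s hs =>
      hasDerivWithinAt_pi.2 (hode s hs.1 ((ENNReal.ofReal_le_ofReal hs.2).trans_lt ht))
  set M := max 1 (⨆ j, w 0 j)
  have hM0 : ∀ i, w 0 i ≤ M := fun i =>
    (le_ciSup (finite_range _).bddAbove i).trans (le_max_right _ _)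
  have hbound : ∀ t : ℝ, 0 ≤ t → ENNReal.ofReal t < τ → ∀ i, 0 < w t i ∧ w t i ≤ M :=
    fun t ht0 ht i => ⟨lotkaVolterra_pos (hsol t ht) ht0 hinit i,
      lotkaVolterra_le (hsol t ht) hinit (le_max_left _ _) hM0 i t (right_mem_Icc.2 ht0)⟩
  refine ⟨hbound, ?_⟩
  by_contra hτ_top
  have hT : 0 < τ.toReal := ENNReal.toReal_pos hτ.ne' hτ_top
  have hdom : ∀ t ∈ Ico 0 τ.toReal, ENNReal.ofReal t < τ :=
    fun t ht => (ENNReal.ofReal_lt_iff_lt_toReal ht.1 hτ_top).2 ht.2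
  obtain ⟨T', hT', z, hz, hzw⟩ := exists_extension_of_mapsTo_isCompact
    (contDiff_lotkaVolterra hd) hT (fun t ht => hsol t (hdom t ht) t (right_mem_Icc.2 ht.1))
    (isCompact_Icc (a := 0) (b := fun _ => M))
    (fun t ht => ⟨fun i => (hbound t ht.1 (hdom t ht) i).1.le,
      fun i => (hbound t ht.1 (hdom t ht) i).2⟩)
  refine hmax (ENNReal.ofReal T') z ?_ (fun t ht0 ht => hasDerivWithinAt_pi.1
      (hz t ⟨ht0, (ENNReal.ofReal_lt_ofReal_iff_of_nonneg ht0).1 ht⟩))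
    (fun t ht0 ht => hzw ⟨ht0, (ENNReal.ofReal_lt_iff_lt_toReal ht0 hτ_top).1 ht⟩)
  rwa [← ENNReal.ofReal_toReal hτ_top, ENNReal.ofReal_lt_ofReal_iff (hT.trans hT')]
end

section
/- The only stationary point of the Lotka–Volterra vector field F (given by F_i(w) = w_i(w_{i+1}−w_1−w_i) for i<d, F_d(w) = w_d(1−w_1−w_d)) in the nonnegative orthant with w_1 > 0 is w* = (1/(d+1), 2/(d+1), ..., d/(d+1)). Consequently, every stationary point w on the boundary of ℝ₊^d satisfies w_1 = 0, and hence 1 − (d+1)·w_1 = 1 > 0. -/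
open Set

/-- the only stationary point of F in the nonnegative orthant with
w_1 > 0 is w* = (1/(d+1),…,d/(d+1)); hence every stationary point on the
boundary of ℝ₊^d has w_1 = 0, so 1 − (d+1)w_1 = 1 > 0. -/
theorem stmt_17 (d : ℕ) (hd : 0 < d)
    (F : (Fin d → ℝ) → Fin d → ℝ)
    (hF : ∀ v i, F v i =
      if h : (i : ℕ) + 1 < d then v i * (v ⟨(i : ℕ) + 1, h⟩ - v ⟨0, hd⟩ - v i)
      else v i * (1 - v ⟨0, hd⟩ - v i)) :
    (∀ w : Fin d → ℝ, (∀ i, 0 ≤ w i) → (∀ i, F w i = 0) → 0 < w ⟨0, hd⟩ →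
      w = fun i : Fin d => ((i : ℕ) + 1 : ℝ) / (d + 1)) ∧
    (∀ w : Fin d → ℝ, (∀ i, 0 ≤ w i) → (∀ i, F w i = 0) → (¬ ∀ i, 0 < w i) →
      w ⟨0, hd⟩ = 0 ∧ (0 : ℝ) < 1 - (d + 1) * w ⟨0, hd⟩) := by
  have key : ∀ w : Fin d → ℝ, (∀ i, 0 ≤ w i) → (∀ i, F w i = 0) → 0 < w ⟨0, hd⟩ →
      w = fun i : Fin d => ((i : ℕ) + 1 : ℝ) / (d + 1) := by
    intro w hnn hF0 hpos
    set a := w ⟨0, hd⟩ with ha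
    have main : ∀ i : ℕ, ∀ h : i < d, w ⟨i, h⟩ = (i + 1) * a := by
      intro i
      induction i with
      | zero => intro h; simp [← ha]
      | succ n ih =>
        intro h
        have hn : n < d := Nat.lt_of_succ_lt h
        have hw_n : w ⟨n, hn⟩ = (n + 1) * a := ih hn
        have hpos_n : 0 < w ⟨n, hn⟩ := by rw [hw_n]; positivity
        have heq := hF0 ⟨n, hn⟩
        rw [hF] at heq
        simp only [Fin.val_mk] at heq
        rw [dif_pos h] at heq
        rcases mul_eq_zero.1 heq with h2 | h2
        · exact absurd h2 hpos_n.ne'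
        · have hrec : w ⟨n + 1, h⟩ = a + w ⟨n, hn⟩ := by linarith
          rw [hrec, hw_n]; push_cast; ring
    have hd1 : d - 1 < d := Nat.sub_lt hd one_pos
    have hlast := hF0 ⟨d - 1, hd1⟩
    rw [hF] at hlast
    simp only [Fin.val_mk] at hlast
    rw [dif_neg (by omega)] at hlast
    have hw_last : w ⟨d - 1, hd1⟩ = ((d - 1 : ℕ) + 1) * a := main (d - 1) hd1
    have hcast : ((d - 1 : ℕ) : ℝ) + 1 = (d : ℝ) := by
      have h1 : (1 : ℕ) ≤ d := hd
      push_cast [Nat.cast_sub h1]; ring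
    rw [hw_last, hcast] at hlast
    have hposd : (0 : ℝ) < (d : ℝ) * a := by positivity
    rcases mul_eq_zero.1 hlast with h2 | h2
    · exact absurd h2 hposd.ne'
    · have haval : a = 1 / (d + 1) := by
        have hdpos : (0 : ℝ) < (d : ℝ) + 1 := by positivity
        field_simp
        linarith
      funext i
      have := main i.1 i.2
      rw [Fin.eta] at this
      rw [this, haval]
      field_simp
  refine ⟨key, ?_⟩
  intro w hnn hF0 hnotall
  have hw0 : w ⟨0, hd⟩ = 0 := by
    by_contra hne
    have hpos : 0 < w ⟨0, hd⟩ := lt_of_le_of_ne (hnn _) (Ne.symm hne)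
    apply hnotall
    intro i
    have := key w hnn hF0 hpos
    rw [this]
    positivity
  refine ⟨hw0, ?_⟩
  rw [hw0]
  norm_num
end

section
/- Let w : ℝ₊ → (0,∞)^d be a global solution of the Lotka–Volterra system w_i' = w_i(b_i − Σ_j a_{i,j} w_j) (with A, b as given), whose coordinates are bounded away from 0 and ∞. Then for each i ∈ {1,...,d}, the time average (1/t)·∫₀ᵗ w_i(s) ds converges to i/(d+1) as t → ∞. -/
open Set Filter Topology

/-! Dividing the equation by `w_i` gives `(log w_i)' = (b - A w)_i`. Averaging over `[0, t]`,
`(log w_i(t) - log w_i(0)) / t = (b - A x(t))_i` for the time average `x(t)`; the left side tends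
to `0` because `log w_i` is bounded, so `A x(t) → b` and `x(t) → A⁻¹ b`. Concretely, the first
`d - 1` rows give `x_k(t) - k x_1(t) → 0` by forward substitution, and the last row then forces
`1 - (d + 1) x_1(t) → 0`. -/

lemma tendsto_inv_mul_sub_atTop_zero_of_abs_le {g : ℝ → ℝ} {M : ℝ}
    (hg : ∀ t, 0 ≤ t → |g t| ≤ M) :
    Tendsto (fun t => t⁻¹ * (g t - g 0)) atTop (𝓝 0) := by
  refine tendsto_inv_atTop_zero.zero_mul_isBoundedUnder_le ⟨2 * M, eventually_map.2 ?_⟩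
  filter_upwards [eventually_ge_atTop (0 : ℝ)] with t ht
  calc ‖g t - g 0‖ ≤ |g t| + |g 0| := abs_sub _ _
    _ ≤ 2 * M := by linarith [hg t ht, hg 0 le_rfl]

theorem tendsto_average_growthRate_atTop_zero {f r : ℝ → ℝ} {c C : ℝ} (hc : 0 < c)
    (hf : ∀ t, 0 ≤ t → HasDerivWithinAt f (f t * r t) (Ici 0) t)
    (hr : ContinuousOn r (Ici 0)) (hbdd : ∀ t, 0 ≤ t → c ≤ f t ∧ f t ≤ C) :
    Tendsto (fun t => (1 / t) * ∫ s in (0 : ℝ)..t, r s) atTop (𝓝 0) := by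
  have hpos : ∀ t, 0 ≤ t → 0 < f t := fun t ht => hc.trans_le (hbdd t ht).1
  have hlog_bdd : ∀ t, 0 ≤ t → |Real.log (f t)| ≤ max |Real.log c| |Real.log C| :=
    fun t ht => abs_le_max_abs_abs (Real.log_le_log hc (hbdd t ht).1)
      (Real.log_le_log (hpos t ht) (hbdd t ht).2)
  have hftc : ∀ t, 0 ≤ t → ∫ s in (0 : ℝ)..t, r s = Real.log (f t) - Real.log (f 0) := by
    intro t ht
    refine intervalIntegral.integral_eq_sub_of_hasDerivAt_of_le (f := fun s => Real.log (f s)) ht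
      ?_ (fun s hs => ?_) ?_
    · exact ContinuousOn.log (fun s hs => (hf s hs.1).continuousWithinAt.mono Icc_subset_Ici_self)
        (fun s hs => (hpos s hs.1).ne')
    · have hfs := ((hf s hs.1.le).hasDerivAt (Ici_mem_nhds hs.1)).log (hpos s hs.1.le).ne'
      rwa [mul_div_cancel_left₀ _ (hpos s hs.1.le).ne'] at hfs
    · exact (hr.mono (by rw [uIcc_of_le ht]; exact Icc_subset_Ici_self)).intervalIntegrable
  refine (tendsto_inv_mul_sub_atTop_zero_of_abs_le hlog_bdd).congr' ?_
  filter_upwards [eventually_ge_atTop 0] with t ht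
  rw [hftc t ht, one_div]

/-- The per-capita growth rate `(b - A v)_i` of the system. -/
def lvGrowthRate {d : ℕ} (hd : 0 < d) (v : Fin d → ℝ) (i : Fin d) : ℝ :=
  if h : (i : ℕ) + 1 < d then v ⟨i + 1, h⟩ - v ⟨0, hd⟩ - v i else 1 - v ⟨0, hd⟩ - v i

section lvGrowthRate

variable {d : ℕ} (hd : 0 < d)

lemma continuous_lvGrowthRate (i : Fin d) : Continuous fun v => lvGrowthRate hd v i := by
  unfold lvGrowthRate
  split_ifs <;> fun_prop

lemma average_lvGrowthRate {w : ℝ → Fin d → ℝ} {t : ℝ} (ht : t ≠ 0)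
    (hw : ∀ i, IntervalIntegrable (fun s => w s i) MeasureTheory.volume 0 t) (j : Fin d) :
    (1 / t) * ∫ s in (0 : ℝ)..t, lvGrowthRate hd (w s) j =
      lvGrowthRate hd (fun i => (1 / t) * ∫ s in (0 : ℝ)..t, w s i) j := by
  unfold lvGrowthRate
  split_ifs
  · rw [intervalIntegral.integral_sub ((hw _).sub (hw _)) (hw _),
      intervalIntegral.integral_sub (hw _) (hw _)]
    ring
  · rw [intervalIntegral.integral_sub (intervalIntegrable_const.sub (hw _)) (hw _),
      intervalIntegral.integral_sub intervalIntegrable_const (hw _)]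
    field_simp
    simp

variable {α : Type*} {l : Filter α} {x : α → Fin d → ℝ}
  (hx : ∀ j, Tendsto (fun t => lvGrowthRate hd (x t) j) l (𝓝 0))
include hx

lemma tendsto_sub_mul_of_tendsto_lvGrowthRate (k : ℕ) (hk : k < d) :
    Tendsto (fun t => x t ⟨k, hk⟩ - (k + 1) * x t ⟨0, hd⟩) l (𝓝 0) := by
  induction k with
  | zero => simpa using tendsto_const_nhds
  | succ k ih =>
    have hstep := hx ⟨k, by omega⟩
    simp only [lvGrowthRate, dif_pos hk] at hstep
    refine (add_zero (0 : ℝ) ▸ hstep.add (ih (by omega))).congr fun t => ?_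
    push_cast
    ring

lemma tendsto_of_tendsto_lvGrowthRate (i : Fin d) :
    Tendsto (fun t => x t i) l (𝓝 (((i : ℕ) + 1 : ℝ) / (d + 1))) := by
  obtain ⟨n, rfl⟩ := Nat.exists_eq_add_one_of_ne_zero hd.ne'
  have hlast := hx (Fin.last n)
  simp only [lvGrowthRate, Fin.val_last, lt_irrefl, dif_neg, not_false_eq_true] at hlast
  have hfirst : Tendsto (fun t => x t ⟨0, hd⟩) l (𝓝 (1 / (n + 1 + 1))) := by
    have h := ((tendsto_const_nhds (x := (1 : ℝ))).sub
      (hlast.add (tendsto_sub_mul_of_tendsto_lvGrowthRate hd hx n (by omega)))).div_const (n + 1 + 1)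
    rw [add_zero, sub_zero] at h
    refine h.congr fun t => ?_
    field_simp
    simp only [Fin.last]
    ring
  have h := (tendsto_sub_mul_of_tendsto_lvGrowthRate hd hx i i.isLt).add
    (hfirst.const_mul ((i : ℕ) + 1 : ℝ))
  rw [zero_add] at h
  convert h using 2 with t
  · ring
  · push_cast
    ring

end lvGrowthRate

/-- for a global solution of the Lotka–Volterra system whose
coordinates are bounded away from 0 and ∞, the time averages converge:
(1/t)∫₀ᵗ w_i → i/(d+1) as t → ∞. -/
theorem stmt_19 (d : ℕ) (hd : 0 < d)
    (F : (Fin d → ℝ) → Fin d → ℝ)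
    (hF : ∀ v i, F v i =
      if h : (i : ℕ) + 1 < d then v i * (v ⟨(i : ℕ) + 1, h⟩ - v ⟨0, hd⟩ - v i)
      else v i * (1 - v ⟨0, hd⟩ - v i))
    (w : ℝ → Fin d → ℝ)
    (hode : ∀ t : ℝ, 0 ≤ t → ∀ i,
      HasDerivWithinAt (fun s => w s i) (F (w t) i) (Ici (0 : ℝ)) t)
    (c C : ℝ) (hc : 0 < c)
    (hbdd : ∀ t : ℝ, 0 ≤ t → ∀ i, c ≤ w t i ∧ w t i ≤ C) :
    ∀ i : Fin d,
      Tendsto (fun t : ℝ => (1 / t) * ∫ s in (0 : ℝ)..t, w s i)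
        atTop (nhds (((i : ℕ) + 1 : ℝ) / (d + 1))) := by
  have hF_rate : ∀ v i, F v i = v i * lvGrowthRate hd v i := by
    intro v i
    rw [hF, lvGrowthRate]
    split_ifs <;> rfl
  have hcont : ∀ i, ContinuousOn (fun s => w s i) (Ici 0) :=
    fun i t ht => (hode t ht i).continuousWithinAt
  refine tendsto_of_tendsto_lvGrowthRate hd fun j => ?_
  have hrate := tendsto_average_growthRate_atTop_zero hc
    (fun t ht => hF_rate (w t) j ▸ hode t ht j)
    ((continuous_lvGrowthRate hd j).comp_continuousOn (continuousOn_pi.2 hcont))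
    (fun t ht => hbdd t ht j)
  refine hrate.congr' ?_
  filter_upwards [eventually_gt_atTop 0] with t ht
  refine average_lvGrowthRate hd ht.ne' (fun i => ?_) j
  exact ((hcont i).mono (by rw [uIcc_of_le ht.le]; exact Icc_subset_Ici_self)).intervalIntegrable
end
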